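/- Let q : ℕ → ℝ be a sequence with q(0) = 1 and q(n) > 0 for all n, and suppose there exist constants θ ≥ 1, c_f, T ≥ 0, u₀ ≥ 0, and a nonnegative sequence U : ℕ → ℝ with U(n+1)² + 2θ q(n+1)² ≤ u₀² + 2θ + 2 c_f T · max_{1≤i≤n+1} U(i) for all n ≥ 0. Then for all n, q(n)² ≤ 1 + (u₀² + 2 c_f T (2 c_f T + u₀ + √2))/2. -/
import Mathlib


theorem lagrange_multiplier_uniform_bound (q U : ℕ → ℝ) (θ cf T u₀ : ℝ)
    (hq0 : q 0 = 1) (hqpos : ∀ n, 0 < q n) (hU : ∀ n, 0 ≤ U n)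
    (hθ : 1 ≤ θ) (hcf : 0 ≤ cf) (hT : 0 ≤ T) (hu₀ : 0 ≤ u₀)
    (h : ∀ n : ℕ, U (n + 1) ^ 2 + 2 * θ * q (n + 1) ^ 2 ≤
      u₀ ^ 2 + 2 * θ + 2 * cf * T *
        ((Finset.Icc 1 (n + 1)).sup' (Finset.nonempty_Icc.mpr (by omega)) U)) :
    ∀ n, q n ^ 2 ≤ 1 + (u₀ ^ 2 + 2 * cf * T * (2 * cf * T + u₀ + Real.sqrt 2)) / 2 := by
  have hs2 : (0:ℝ) ≤ Real.sqrt 2 := Real.sqrt_nonneg 2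
  have hA : (0:ℝ) ≤ 2 * cf * T := by positivity
  intro n
  match n with
  | 0 =>
    rw [hq0]
    nlinarith [mul_nonneg hA (by linarith : (0:ℝ) ≤ 2 * cf * T + u₀ + Real.sqrt 2)]
  | m + 1 =>
    set C := Real.sqrt (2 * θ) with hCdef
    have hC0 : 0 ≤ C := Real.sqrt_nonneg _
    have hC2 : C ^ 2 = 2 * θ := Real.sq_sqrt (by linarith)
    have hs22 : Real.sqrt 2 ^ 2 = 2 := Real.sq_sqrt (by norm_num)
    -- C ≤ √2 * θ
    have hCθ : C ≤ Real.sqrt 2 * θ := by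
      have h1 : C ≤ Real.sqrt (2 * θ ^ 2) := Real.sqrt_le_sqrt (by nlinarith)
      rwa [Real.sqrt_mul (by norm_num) (θ ^ 2), Real.sqrt_sq (by linarith)] at h1
    -- the sup for index m
    set s := (Finset.Icc 1 (m + 1)).sup' (Finset.nonempty_Icc.mpr (by omega)) U with hsdef
    have hs0 : 0 ≤ s := le_trans (hU 1) (Finset.le_sup' U (by simp))
    -- key: s ^ 2 ≤ u₀ ^ 2 + 2 θ + 2 cf T s
    have hkey : s ^ 2 ≤ u₀ ^ 2 + 2 * θ + 2 * cf * T * s := by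
      obtain ⟨i, hi, hsi⟩ := Finset.exists_mem_eq_sup'
        (Finset.nonempty_Icc.mpr (by omega : (1:ℕ) ≤ m + 1)) U
      simp only [Finset.mem_Icc] at hi
      obtain ⟨j, rfl⟩ := Nat.exists_eq_succ_of_ne_zero (by omega : i ≠ 0)
      have hsub : (Finset.Icc 1 (j + 1)).sup' (Finset.nonempty_Icc.mpr (by omega)) U ≤ s := by
        apply Finset.sup'_le
        intro k hk
        simp only [Finset.mem_Icc] at hk
        exact Finset.le_sup' U (Finset.mem_Icc.mpr ⟨hk.1, by omega⟩)
      have hhj := h j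
      have hq := sq_nonneg (q (j + 1))
      have hsu : s = U (j + 1) := hsdef.trans hsi
      rw [hsu]
      nlinarith
    -- s ≤ 2 cf T + u₀ + C
    have hsle : s ≤ 2 * cf * T + u₀ + C := by
      by_contra hcon
      push_neg at hcon
      nlinarith
    -- conclude using h m
    have hm := h m
    have hU2 := sq_nonneg (U (m + 1))
    have hbig : 2 * θ * q (m + 1) ^ 2 ≤ u₀ ^ 2 + 2 * θ + 2 * cf * T * (2 * cf * T + u₀ + C) := by
      nlinarith
    have hX : (0:ℝ) ≤ u₀ ^ 2 + 2 * cf * T * (2 * cf * T + u₀) := by nlinarith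
    nlinarith [mul_nonneg hA hC0, mul_le_mul_of_nonneg_left hCθ hA,
      mul_le_mul_of_nonneg_right hX (by linarith : (0:ℝ) ≤ θ - 1)]
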